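/- arXiv:2409.03068 — 2 statements merged into one kernel-verified Lean document; each statement's English description precedes it below -/
import Mathlib

section
/- For all integers m, n ≥ 2 and all i, j ∈ {1,2}, P_{i,j}(T, m×n) = ⋃_{k,l∈{0,2}} Q_{i+k,j+l}(T, m×n), and the four sets Q_{i+k,j+l}(T, m×n) for k,l∈{0,2} are non-empty and pairwise disjoint. -/
/-- The 16-letter alphabet 𝒜 = {A,…,P}. -/
inductive A16 : Type
  | A | B | C | D | E | F | G | H | I | J | K | L | M | N | O | P
  deriving DecidableEq

/-- The 2×2 block substitution μ on 𝒜 (rows top to bottom). -/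
def mu : A16 → Fin 2 → Fin 2 → A16
  | .A => ![![.A, .F], ![.G, .C]]
  | .B => ![![.A, .F], ![.H, .D]]
  | .C => ![![.B, .E], ![.G, .C]]
  | .D => ![![.B, .E], ![.H, .D]]
  | .E => ![![.A, .N], ![.G, .K]]
  | .F => ![![.A, .N], ![.H, .L]]
  | .G => ![![.B, .M], ![.G, .K]]
  | .H => ![![.B, .M], ![.H, .L]]
  | .I => ![![.I, .F], ![.O, .C]]
  | .J => ![![.I, .F], ![.P, .D]]
  | .K => ![![.J, .E], ![.O, .C]]
  | .L => ![![.J, .E], ![.P, .D]]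
  | .M => ![![.I, .N], ![.O, .K]]
  | .N => ![![.I, .N], ![.P, .L]]
  | .O => ![![.J, .M], ![.O, .K]]
  | .P => ![![.J, .M], ![.P, .L]]

/-- Entry version of μ, indexed by arbitrary naturals (via mod 2). -/
def muE (x : A16) (r c : ℕ) : A16 :=
  mu x ⟨r % 2, by omega⟩ ⟨c % 2, by omega⟩

/-- `superE n x` is the supertile μⁿ(x), a 2ⁿ×2ⁿ array over 𝒜,
given as a total function on ℕ × ℕ (only indices < 2ⁿ are relevant). -/
def superE : ℕ → A16 → ℕ → ℕ → A16
  | 0, x, _, _ => x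
  | n + 1, x, r, c => muE (superE n x (r / 2) (c / 2)) r c

/-- The supertile T_k = μᵏ(N). -/
def Tfun (k : ℕ) : ℕ → ℕ → A16 := superE k .N

/-- An m×n pattern over the alphabet α. -/
abbrev Pat (α : Type) (m n : ℕ) := Fin m → Fin n → α

/-- The set of m×n patterns occurring in the size×size array X. -/
def patIn {α : Type} (X : ℕ → ℕ → α) (size m n : ℕ) : Set (Pat α m n) :=
  { p | ∃ r c : ℕ, r + m ≤ size ∧ c + n ≤ size ∧
      ∀ (i : Fin m) (j : Fin n), p i j = X (r + i) (c + j) }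

/-- P(T, m×n) = ⋃ₖ P(T_k, m×n). -/
def PT (m n : ℕ) : Set (Pat A16 m n) := ⋃ k : ℕ, patIn (Tfun k) (2 ^ k) m n

/-- μ applied to an m×n pattern, as a total 2m×2n array on ℕ × ℕ
(indices are reduced mod the valid range; in range this is exactly μ(p)). -/
def muPatE {m n : ℕ} (p : Pat A16 m n) (r c : ℕ) : A16 :=
  if hm : 0 < m then
    if hn : 0 < n then
      muE (p ⟨r / 2 % m, Nat.mod_lt _ hm⟩ ⟨c / 2 % n, Nat.mod_lt _ hn⟩) r c
    else .A
  else .A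

/-- μ² applied to an m×n pattern, as a total 4m×4n array on ℕ × ℕ. -/
def mu2PatE {m n : ℕ} (p : Pat A16 m n) (r c : ℕ) : A16 :=
  muE (muPatE p (r / 2) (c / 2)) r c

/-- P_{i,j}(T, m×n) = { μ(x)[i,j,m×n] : x ∈ P(T,m×n) } (1-based corner (i,j)). -/
def Pij (i j m n : ℕ) : Set (Pat A16 m n) :=
  { q | ∃ x ∈ PT m n, ∀ (a : Fin m) (b : Fin n),
      q a b = muPatE x (i - 1 + a) (j - 1 + b) }

/-- Q_{i,j}(T, m×n) = { μ²(x)[i,j,m×n] : x ∈ P(T,m×n) } (1-based corner (i,j)). -/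
def Qij (i j m n : ℕ) : Set (Pat A16 m n) :=
  { q | ∃ x ∈ PT m n, ∀ (a : Fin m) (b : Fin n),
      q a b = mu2PatE x (i - 1 + a) (j - 1 + b) }

/-- The 2×2 block substitution φ from 𝒜 to ℬ = {0,1,2,3}. -/
def phi : A16 → Fin 2 → Fin 2 → Fin 4
  | .A => ![![0, 1], ![0, 0]]
  | .B => ![![0, 1], ![1, 1]]
  | .C => ![![1, 0], ![0, 0]]
  | .D => ![![1, 0], ![1, 1]]
  | .E => ![![0, 3], ![0, 2]]
  | .F => ![![0, 3], ![1, 3]]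
  | .G => ![![1, 2], ![0, 2]]
  | .H => ![![1, 2], ![1, 3]]
  | .I => ![![2, 1], ![2, 0]]
  | .J => ![![2, 1], ![3, 1]]
  | .K => ![![3, 0], ![2, 0]]
  | .L => ![![3, 0], ![3, 1]]
  | .M => ![![2, 3], ![2, 2]]
  | .N => ![![2, 3], ![3, 3]]
  | .O => ![![3, 2], ![2, 2]]
  | .P => ![![3, 2], ![3, 3]]

/-- Entry version of φ, indexed by arbitrary naturals (via mod 2). -/
def phiE (x : A16) (r c : ℕ) : Fin 4 :=
  phi x ⟨r % 2, by omega⟩ ⟨c % 2, by omega⟩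

/-- φ applied to an m×n pattern over 𝒜, as a total 2m×2n array on ℕ × ℕ. -/
def phiPatE {m n : ℕ} (p : Pat A16 m n) (r c : ℕ) : Fin 4 :=
  if hm : 0 < m then
    if hn : 0 < n then
      phiE (p ⟨r / 2 % m, Nat.mod_lt _ hm⟩ ⟨c / 2 % n, Nat.mod_lt _ hn⟩) r c
    else 0
  else 0

/-- φ(T_k), a 2^(k+1)×2^(k+1) array over ℬ. -/
def Sfun (k : ℕ) (r c : ℕ) : Fin 4 := phiE (Tfun k (r / 2) (c / 2)) r c

/-- P(S, m×n) = ⋃_{k≥1} P(φ(T_{k-1}), m×n). -/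
def PS (m n : ℕ) : Set (Pat (Fin 4) m n) :=
  ⋃ k : ℕ, patIn (Sfun k) (2 ^ (k + 1)) m n

/-- P_{i,j}(S, m×n) = { φ(x)[i,j,m×n] : x ∈ P(T,m×n) } (1-based corner (i,j)). -/
def PSij (i j m n : ℕ) : Set (Pat (Fin 4) m n) :=
  { q | ∃ x ∈ PT m n, ∀ (a : Fin m) (b : Fin n),
      q a b = phiPatE x (i - 1 + a) (j - 1 + b) }

/-- A_n = |P(S, n×n)|. -/
noncomputable def Acnt (n : ℕ) : ℕ := Nat.card (PS n n)

/-- a_{i,j}(n) = |P_{i,j}(T, n×n)|. -/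
noncomputable def aT (i j n : ℕ) : ℕ := Nat.card (Pij i j n n)

/-- b_{i,j}(n) = |P_{i,j}(T, n×(n+1))|. -/
noncomputable def bT (i j n : ℕ) : ℕ := Nat.card (Pij i j n (n + 1))

/-- c_{i,j}(n) = |P_{i,j}(T, (n+1)×n)|. -/
noncomputable def cT (i j n : ℕ) : ℕ := Nat.card (Pij i j (n + 1) n)

/-!
A pattern `μ(y)[i,j]` of `P_{i,j}` is a window of a supertile `T_{K+1}` at the offset
`(2r + i - 1, 2c + j - 1)`. Since `N` occurs in `T₃` at `(4, 3)`, `T_{K+1}` sits inside `T_{K+4}`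
away from its borders, and there the offset `2r` becomes `4R + k` with `k ∈ {0, 2}`; this exhibits
the pattern as `μ²(x)[i+k, j+l]` for an `m×n` window `x` of `T_{K+2}`. Conversely
`μ²(x)[i+k, j+l] = μ(y)[i,j]` for the window `y` of `μ(x)` shifted by `(k/2, l/2)`.

For disjointness: the top-right letter of `μ(w)` is `F`, `N`, `E` or `M` according to the position
of `w` in its own `μ`-block. In a pattern of `Q_{i+k,j+l}` the entry in row `i - 1` and column
`2 - j` sits in an even row and an odd column of `μ²(x)`, so it reveals `(k, l)`.
-/

theorem mem_one_two_iff {i : ℕ} : i ∈ ({1, 2} : Set ℕ) ↔ 1 ≤ i ∧ i ≤ 2 := by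
  simp only [Set.mem_insert_iff, Set.mem_singleton_iff]
  omega

theorem mem_zero_two_iff {k : ℕ} : k ∈ ({0, 2} : Set ℕ) ↔ k % 2 = 0 ∧ k ≤ 2 := by
  simp only [Set.mem_insert_iff, Set.mem_singleton_iff]
  omega

theorem muE_two_mul_add (w : A16) (a b r c : ℕ) : muE w (2 * a + r) (2 * b + c) = muE w r c := by
  simp only [muE, Nat.mul_add_mod]

theorem superE_succ_two_mul_add (K : ℕ) (w : A16) (r c u v : ℕ) :
    superE (K + 1) w (2 * r + u) (2 * c + v) = muE (superE K w (r + u / 2) (c + v / 2)) u v := by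
  rw [superE, muE_two_mul_add]
  congr 2 <;> omega

theorem superE_add (K s : ℕ) (w : A16) {p q a b : ℕ} (ha : a < 2 ^ K) (hb : b < 2 ^ K) :
    superE (K + s) w (2 ^ K * p + a) (2 ^ K * q + b) = superE K (superE s w p q) a b := by
  induction K generalizing a b with
  | zero =>
    obtain rfl : a = 0 := by simpa using ha
    obtain rfl : b = 0 := by simpa using hb
    simp [superE]
  | succ K ih =>
    rw [pow_succ] at ha hb
    rw [Nat.add_right_comm, pow_succ', mul_assoc, mul_assoc, superE_succ_two_mul_add,
      ih (by omega) (by omega)]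
    rfl

theorem Tfun_add_three (K : ℕ) {a b : ℕ} (ha : a < 2 ^ K) (hb : b < 2 ^ K) :
    Tfun (K + 3) (2 ^ K * 4 + a) (2 ^ K * 3 + b) = Tfun K a b :=
  superE_add K 3 .N ha hb

theorem muPatE_of_window {m n K r c : ℕ} {w : A16} {x : Pat A16 m n}
    (hx : ∀ a b, x a b = superE K w (r + a) (c + b)) {u v : ℕ} (hu : u < 2 * m) (hv : v < 2 * n) :
    muPatE x u v = superE (K + 1) w (2 * r + u) (2 * c + v) := by
  have hu' : u / 2 < m := by omega
  have hv' : v / 2 < n := by omega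
  rw [muPatE, dif_pos (by omega), dif_pos (by omega), superE_succ_two_mul_add]
  simp only [Nat.mod_eq_of_lt hu', Nat.mod_eq_of_lt hv', hx]

theorem mu2PatE_of_window {m n K r c : ℕ} {w : A16} {x : Pat A16 m n}
    (hx : ∀ a b, x a b = superE K w (r + a) (c + b)) {u v : ℕ} (hu : u < 4 * m) (hv : v < 4 * n) :
    mu2PatE x u v = superE (K + 2) w (4 * r + u) (4 * c + v) := by
  rw [mu2PatE, muPatE_of_window hx (by omega) (by omega), show 4 * r = 2 * (2 * r) by ring,
    show 4 * c = 2 * (2 * c) by ring]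
  exact (superE_succ_two_mul_add (K + 1) w _ _ u v).symm

theorem PT_nonempty (m n : ℕ) : (PT m n).Nonempty := by
  have := Nat.lt_two_pow_self (n := m + n)
  exact ⟨fun a b => Tfun (m + n) a b,
    Set.mem_iUnion.2 ⟨m + n, 0, 0, by omega, by omega, fun a b => by simp only [zero_add]⟩⟩

theorem Qij_nonempty (i j m n : ℕ) : (Qij i j m n).Nonempty :=
  let ⟨x, hx⟩ := PT_nonempty m n
  ⟨_, x, hx, fun _ _ => rfl⟩

/-- The position of `w` in its `μ`-block, read off the top-right letter of `μ(w)`. -/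
def parentPos : A16 → ℕ × ℕ
  | .E => (1, 1)
  | .M => (1, 0)
  | .N => (0, 1)
  | _ => (0, 0)

theorem parentPos_mu_mu (z : A16) (t s : Fin 2) :
    parentPos (mu (mu z t s) 0 1) = ((t : ℕ), (s : ℕ)) := by
  revert t s
  cases z <;> decide

theorem parentPos_mu2PatE {m n : ℕ} (hm : 0 < m) (hn : 0 < n) (x : Pat A16 m n) {u v : ℕ}
    (hu : u % 2 = 0) (hv : v % 2 = 1) :
    parentPos (mu2PatE x u v) = (u / 2 % 2, v / 2 % 2) := by
  rw [mu2PatE, muPatE, dif_pos hm, dif_pos hn, muE, muE]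
  simp only [hu, hv]
  exact parentPos_mu_mu _ _ _

section

variable {m n i j : ℕ}

theorem Qij_subset_Pij (hm : 0 < m) (hn : 0 < n) (hi : i ∈ ({1, 2} : Set ℕ))
    (hj : j ∈ ({1, 2} : Set ℕ)) {k l : ℕ} (hk : k ∈ ({0, 2} : Set ℕ)) (hl : l ∈ ({0, 2} : Set ℕ)) :
    Qij (i + k) (j + l) m n ⊆ Pij i j m n := by
  obtain ⟨hi₁, hi₂⟩ := mem_one_two_iff.1 hi
  obtain ⟨hj₁, hj₂⟩ := mem_one_two_iff.1 hj
  obtain ⟨hk₀, hk₂⟩ := mem_zero_two_iff.1 hk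
  obtain ⟨hl₀, hl₂⟩ := mem_zero_two_iff.1 hl
  rintro q ⟨x, hx, hq⟩
  obtain ⟨K, R, C, hR, hC, hxT⟩ := Set.mem_iUnion.1 hx
  have hK : 2 ^ (K + 1) = 2 * 2 ^ K := pow_succ' 2 K
  refine ⟨fun a b => superE (K + 1) .N (2 * R + k / 2 + a) (2 * C + l / 2 + b),
    Set.mem_iUnion.2 ⟨K + 1, 2 * R + k / 2, 2 * C + l / 2, by omega, by omega, fun _ _ => rfl⟩,
    fun a b => ?_⟩
  rw [hq, mu2PatE_of_window hxT (by omega) (by omega),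
    muPatE_of_window (fun _ _ => rfl) (by omega) (by omega)]
  congr 1 <;> omega

theorem Pij_subset_iUnion_Qij (hm : 0 < m) (hn : 0 < n) (hi : i ∈ ({1, 2} : Set ℕ))
    (hj : j ∈ ({1, 2} : Set ℕ)) :
    Pij i j m n ⊆ ⋃ k ∈ ({0, 2} : Set ℕ), ⋃ l ∈ ({0, 2} : Set ℕ), Qij (i + k) (j + l) m n := by
  obtain ⟨hi₁, hi₂⟩ := mem_one_two_iff.1 hi
  obtain ⟨hj₁, hj₂⟩ := mem_one_two_iff.1 hj
  rintro q ⟨y, hy, hq⟩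
  obtain ⟨K, r, c, hr, hc, hyT⟩ := Set.mem_iUnion.1 hy
  have hK₁ : 2 ^ (K + 1) = 2 * 2 ^ K := pow_succ' 2 K
  have hK₂ : 2 ^ (K + 2) = 4 * 2 ^ K := by ring
  -- `μ(y)` is also the window of `T_{K+4}` at `(r₀, c₀)`, and there, unlike in `T_{K+1}`, the
  -- `m×n` window of `T_{K+2}` at `(r₀ / 4, c₀ / 4)` fits.
  obtain ⟨r₀, hr₀⟩ : ∃ r₀, r₀ = 2 ^ (K + 1) * 4 + 2 * r := ⟨_, rfl⟩
  obtain ⟨c₀, hc₀⟩ : ∃ c₀, c₀ = 2 ^ (K + 1) * 3 + 2 * c := ⟨_, rfl⟩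
  simp only [Set.mem_iUnion]
  refine ⟨r₀ % 4, mem_zero_two_iff.2 (by omega), c₀ % 4, mem_zero_two_iff.2 (by omega),
    fun a b => superE (K + 2) .N (r₀ / 4 + a) (c₀ / 4 + b),
    Set.mem_iUnion.2 ⟨K + 2, r₀ / 4, c₀ / 4, by omega, by omega, fun _ _ => rfl⟩, fun a b => ?_⟩
  rw [hq, muPatE_of_window hyT (by omega) (by omega),
    mu2PatE_of_window (fun _ _ => rfl) (by omega) (by omega)]
  show Tfun (K + 1) _ _ = Tfun (K + 2 + 2) _ _
  rw [← Tfun_add_three (K + 1) (by omega) (by omega)]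
  congr 1 <;> omega

theorem disjoint_Qij_of_ne (hm : 2 ≤ m) (hn : 2 ≤ n) (hi : i ∈ ({1, 2} : Set ℕ))
    (hj : j ∈ ({1, 2} : Set ℕ)) {k l k' l' : ℕ} (hk : k ∈ ({0, 2} : Set ℕ))
    (hl : l ∈ ({0, 2} : Set ℕ)) (hk' : k' ∈ ({0, 2} : Set ℕ)) (hl' : l' ∈ ({0, 2} : Set ℕ))
    (hne : (k, l) ≠ (k', l')) :
    Disjoint (Qij (i + k) (j + l) m n) (Qij (i + k') (j + l') m n) := by
  obtain ⟨hi₁, hi₂⟩ := mem_one_two_iff.1 hi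
  obtain ⟨hj₁, hj₂⟩ := mem_one_two_iff.1 hj
  obtain ⟨hk₀, hk₂⟩ := mem_zero_two_iff.1 hk
  obtain ⟨hl₀, hl₂⟩ := mem_zero_two_iff.1 hl
  obtain ⟨hk₀', hk₂'⟩ := mem_zero_two_iff.1 hk'
  obtain ⟨hl₀', hl₂'⟩ := mem_zero_two_iff.1 hl'
  rw [Set.disjoint_left]
  rintro q ⟨x, -, hx⟩ ⟨x', -, hx'⟩
  have h := parentPos_mu2PatE (by omega) (by omega) x
    (u := i + k - 1 + (i - 1)) (v := j + l - 1 + (2 - j)) (by omega) (by omega)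
  have h' := parentPos_mu2PatE (by omega) (by omega) x'
    (u := i + k' - 1 + (i - 1)) (v := j + l' - 1 + (2 - j)) (by omega) (by omega)
  rw [← hx ⟨i - 1, by omega⟩ ⟨2 - j, by omega⟩] at h
  rw [← hx' ⟨i - 1, by omega⟩ ⟨2 - j, by omega⟩] at h'
  rw [h, Prod.ext_iff] at h'
  exact hne (Prod.ext (by omega) (by omega))

end

/-- Lemma 3.9: for m, n ≥ 2 and i, j ∈ {1,2}, P_{i,j}(T, m×n) is the union of
the sets Q_{i+k,j+l}(T, m×n) for k,l ∈ {0,2}, which are non-empty and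
pairwise disjoint. -/
theorem disjoint_Qij (m n : ℕ) (hm : 2 ≤ m) (hn : 2 ≤ n)
    (i j : ℕ) (hi : i ∈ ({1, 2} : Set ℕ)) (hj : j ∈ ({1, 2} : Set ℕ)) :
    (Pij i j m n =
        ⋃ k ∈ ({0, 2} : Set ℕ), ⋃ l ∈ ({0, 2} : Set ℕ), Qij (i + k) (j + l) m n) ∧
    (∀ k ∈ ({0, 2} : Set ℕ), ∀ l ∈ ({0, 2} : Set ℕ),
        (Qij (i + k) (j + l) m n).Nonempty) ∧
    (∀ k ∈ ({0, 2} : Set ℕ), ∀ l ∈ ({0, 2} : Set ℕ),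
      ∀ k' ∈ ({0, 2} : Set ℕ), ∀ l' ∈ ({0, 2} : Set ℕ),
        (k, l) ≠ (k', l') →
          Disjoint (Qij (i + k) (j + l) m n) (Qij (i + k') (j + l') m n)) := by
  have hm₀ : 0 < m := by omega
  have hn₀ : 0 < n := by omega
  refine ⟨(Pij_subset_iUnion_Qij hm₀ hn₀ hi hj).antisymm ?_, fun k _ l _ => Qij_nonempty _ _ m n,
    fun k hk l hl k' hk' l' hl' => disjoint_Qij_of_ne hm hn hi hj hk hl hk' hl'⟩
  exact Set.iUnion₂_subset fun k hk => Set.iUnion₂_subset fun l hl =>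
    Qij_subset_Pij hm₀ hn₀ hi hj hk hl
end

section
/- For every integer n ≥ 2: (1) a_{1,2}(2n) = b_{1,2}(2n) = b_{2,2}(2n−1); (2) a_{2,1}(2n) = c_{1,1}(2n) = c_{2,1}(2n−1); (3) a_{2,2}(2n) = a_{1,2}(2n+1) = c_{1,2}(2n) = b_{2,2}(2n); (4) a_{1,1}(2n+1) = b_{1,1}(2n+1) = b_{2,1}(2n); (5) a_{2,1}(2n+1) = a_{1,1}(2n+2) = b_{2,1}(2n+1) = c_{1,1}(2n+1); (6) a_{2,2}(2n+1) = c_{1,2}(2n+1) = c_{2,2}(2n). -/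
/-!
Each count is the number of distinct windows of `μ(y)`, `y` ranging over the patterns of `T`
of the size the window touches. The windows compared in one equality all contain a common core
and lie in a common hull, and the core of `μ(y)` already determines its hull. Indeed a pattern of
`T` is tiled by `μ`-blocks, so once the one letter whose whole block lies in the core is known, so
is the position of every letter inside its block; and knowing that position, a letter is
recognized from the lower-left entry of its block, while the upper-right entry is determined by
either neighbour in the block. Hence all these windows have the same fibres, and the counts agree.
-/

open Set Function

-- Both images are the quotient of `S` by the same kernel.
lemma natCard_image_eq_of_forall_iff {α β γ : Type*} {S : Set α} {F : α → β} {G : α → γ}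
    (h : ∀ y ∈ S, ∀ y' ∈ S, F y = F y' ↔ G y = G y') : Nat.card (F '' S) = Nat.card (G '' S) := by
  have hker : Setoid.ker (fun y : S => F y) = Setoid.ker (fun y : S => G y) :=
    Setoid.ext fun y y' => h y y.2 y' y'.2
  rw [image_eq_range, image_eq_range, ← Nat.card_congr (Setoid.quotientKerEquivRange _),
    ← Nat.card_congr (Setoid.quotientKerEquivRange _), hker]

instance : Fintype A16 where
  elems := ⟨↑[A16.A, A16.B, A16.C, A16.D, A16.E, A16.F, A16.G, A16.H, A16.I, A16.J, A16.K,
    A16.L, A16.M, A16.N, A16.O, A16.P], by decide⟩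
  complete := by intro x; cases x <;> decide

def blockRow : A16 → ℕ
  | .A | .B | .E | .F | .I | .J | .M | .N => 0
  | _ => 1

def blockCol : A16 → ℕ
  | .A | .B | .G | .H | .I | .J | .O | .P => 0
  | _ => 1

lemma blockRow_mu (u : A16) (δ ε : Fin 2) : blockRow (mu u δ ε) = δ := by
  revert u δ ε; decide

lemma blockCol_mu (u : A16) (δ ε : Fin 2) : blockCol (mu u δ ε) = ε := by
  revert u δ ε; decide

lemma mu_injective : Injective mu := by decide

lemma eq_of_mu_one_zero_eq {u v : A16} (h : mu u 1 0 = mu v 1 0)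
    (hr : blockRow u = blockRow v) (hc : blockCol u = blockCol v) : u = v := by
  revert u v; decide

lemma mu_zero_one_eq_of_mu_zero_zero_eq {u v : A16} (h : mu u 0 0 = mu v 0 0)
    (hr : blockRow u = blockRow v) (hc : blockCol u = blockCol v) : mu u 0 1 = mu v 0 1 := by
  revert u v; decide

lemma mu_zero_one_eq_of_mu_one_one_eq {u v : A16} (h : mu u 1 1 = mu v 1 1)
    (hr : blockRow u = blockRow v) (hc : blockCol u = blockCol v) : mu u 0 1 = mu v 0 1 := by
  revert u v; decide

lemma superE_add_s8 (k j : ℕ) (x : A16) (r c : ℕ) :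
    superE (k + j) x r c = superE k (superE j x (r / 2 ^ k) (c / 2 ^ k)) r c := by
  induction k generalizing r c with
  | zero => simp [superE]
  | succ k ih =>
    rw [Nat.add_right_comm, superE, ih, superE, Nat.div_div_eq_div_mul,
      Nat.div_div_eq_div_mul, ← pow_succ']

lemma superE_add_mul_two_pow (k : ℕ) (x : A16) (r c s t : ℕ) :
    superE k x (r + s * 2 ^ k) (c + t * 2 ^ k) = superE k x r c := by
  induction k generalizing r c with
  | zero => rfl
  | succ k ih =>
    have hdiv (a b : ℕ) : (a + b * 2 ^ (k + 1)) / 2 = a / 2 + b * 2 ^ k := by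
      rw [pow_succ, ← mul_assoc, Nat.add_mul_div_right _ _ two_pos]
    have hmod (a b : ℕ) : (a + b * 2 ^ (k + 1)) % 2 = a % 2 := by
      rw [pow_succ, ← mul_assoc, Nat.add_mul_mod_self_right]
    simp only [superE, muE, hdiv, hmod, ih]

-- `N` occurs in `μ³(N)` at position `(4, 3)`.
lemma Tfun_add_three_s8 (k r c : ℕ) (hr : r < 2 ^ k) (hc : c < 2 ^ k) :
    Tfun (k + 3) (r + 4 * 2 ^ k) (c + 3 * 2 ^ k) = Tfun k r c := by
  have hN : superE 3 A16.N 4 3 = A16.N := by decide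
  have hdiv (a b : ℕ) (ha : a < 2 ^ k) : (a + b * 2 ^ k) / 2 ^ k = b := by
    rw [Nat.add_mul_div_right _ _ (by positivity), Nat.div_eq_of_lt ha, zero_add]
  rw [Tfun, superE_add_s8, hdiv r 4 hr, hdiv c 3 hc, hN, superE_add_mul_two_pow, Tfun]

lemma mem_PT {m n : ℕ} {y : Pat A16 m n} :
    y ∈ PT m n ↔ ∃ k r c : ℕ, r + m ≤ 2 ^ k ∧ c + n ≤ 2 ^ k ∧
      ∀ (i : Fin m) (j : Fin n), y i j = Tfun k (r + i) (c + j) := by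
  simp [PT, patIn]

lemma exists_Tfun_margin {m n : ℕ} {y : Pat A16 m n} (hy : y ∈ PT m n) (d : ℕ) :
    ∃ k r c : ℕ, r + m + d ≤ 2 ^ k ∧ c + n + d ≤ 2 ^ k ∧
      ∀ (i : Fin m) (j : Fin n), y i j = Tfun k (r + i) (c + j) := by
  induction d with
  | zero => simpa using mem_PT.mp hy
  | succ d ih =>
    obtain ⟨k, r, c, hr, hc, hy⟩ := ih
    have hk : 1 ≤ 2 ^ k := Nat.one_le_two_pow
    refine ⟨k + 3, r + 4 * 2 ^ k, c + 3 * 2 ^ k, by rw [pow_add]; omega,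
      by rw [pow_add]; omega, fun i j => ?_⟩
    rw [hy, ← Tfun_add_three_s8 k _ _ (by omega) (by omega)]
    congr 1 <;> omega

def Pat.restrict {α : Type} {m n m₀ n₀ : ℕ} (hm : m₀ ≤ m) (hn : n₀ ≤ n) (x : Pat α m n) :
    Pat α m₀ n₀ :=
  fun a b => x (Fin.castLE hm a) (Fin.castLE hn b)

lemma image_restrict_PT {m n m₀ n₀ : ℕ} (hm : m₀ ≤ m) (hn : n₀ ≤ n) :
    Pat.restrict hm hn '' PT m n = PT m₀ n₀ := by
  refine Subset.antisymm ?_ fun y hy => ?_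
  · rintro _ ⟨x, hx, rfl⟩
    obtain ⟨k, r, c, hr, hc, hx⟩ := mem_PT.mp hx
    exact mem_PT.mpr ⟨k, r, c, by omega, by omega, fun i j => hx _ _⟩
  · obtain ⟨k, r, c, hr, hc, hy⟩ := exists_Tfun_margin hy (m + n)
    exact ⟨fun a b => Tfun k (r + a) (c + b),
      mem_PT.mpr ⟨k, r, c, by omega, by omega, fun _ _ => rfl⟩, funext₂ fun i j => (hy i j).symm⟩

-- Every pattern of `T` lies inside some `T_k` with `k ≥ 1`, which is tiled by `μ`-blocks.
lemma exists_blockRow_blockCol_eq {m n : ℕ} {y : Pat A16 m n} (hy : y ∈ PT m n) :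
    ∃ ρ γ : ℕ, ∀ (i : Fin m) (j : Fin n),
      blockRow (y i j) = (ρ + i) % 2 ∧ blockCol (y i j) = (γ + j) % 2 := by
  obtain ⟨k, r, c, hr, -, hy⟩ := exists_Tfun_margin hy 1
  cases k with
  | zero => exact ⟨0, 0, fun i => absurd i.2 (by simp only [pow_zero] at hr; omega)⟩
  | succ k =>
    exact ⟨r, c, fun i j => by rw [hy, Tfun, superE, muE, blockRow_mu, blockCol_mu]; simp⟩

lemma blockRow_blockCol_eq_of_eq {m n : ℕ} {y y' : Pat A16 m n} (hy : y ∈ PT m n)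
    (hy' : y' ∈ PT m n) {i₀ : Fin m} {j₀ : Fin n} (h : y i₀ j₀ = y' i₀ j₀) (i : Fin m)
    (j : Fin n) : blockRow (y i j) = blockRow (y' i j) ∧ blockCol (y i j) = blockCol (y' i j) := by
  obtain ⟨ρ, γ, hργ⟩ := exists_blockRow_blockCol_eq hy
  obtain ⟨ρ', γ', hργ'⟩ := exists_blockRow_blockCol_eq hy'
  have h₀ := hργ i₀ j₀
  have h₀' := hργ' i₀ j₀
  rw [h] at h₀
  rw [(hργ i j).1, (hργ' i j).1, (hργ i j).2, (hργ' i j).2]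
  omega

lemma muPatE_of_lt {m n : ℕ} (p : Pat A16 m n) {r c : ℕ} (hr : r / 2 < m) (hc : c / 2 < n) :
    muPatE p r c = muE (p ⟨r / 2, hr⟩ ⟨c / 2, hc⟩) r c := by
  have hm : 0 < m := by omega
  have hn : 0 < n := by omega
  simp only [muPatE, dif_pos hm, dif_pos hn, Nat.mod_eq_of_lt hr, Nat.mod_eq_of_lt hc]

lemma muPatE_block {m n : ℕ} (p : Pat A16 m n) (i : Fin m) (j : Fin n) (δ ε : Fin 2) :
    muPatE p (2 * i + δ) (2 * j + ε) = mu (p i j) δ ε := by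
  rw [muPatE_of_lt p (by omega) (by omega), muE]
  congr <;> omega

lemma muPatE_restrict {m n m₀ n₀ : ℕ} (hm : m₀ ≤ m) (hn : n₀ ≤ n) (x : Pat A16 m n) {r c : ℕ}
    (hr : r < 2 * m₀) (hc : c < 2 * n₀) : muPatE (x.restrict hm hn) r c = muPatE x r c := by
  rw [muPatE_of_lt _ (by omega) (by omega), muPatE_of_lt x (by omega) (by omega)]
  rfl

/- The core rectangle `[1, B] × [l, 2K]` contains the whole block of the letter `(1, K - 1)`,
which fixes the block positions of all letters; then every letter whose lower-left entry lies
in the core is recognized, and the two kinds of cells left over are upper-right entries whose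
lower-right or upper-left neighbour lies in the core. -/
theorem eqOn_of_eqOn_core {m₀ n₀ B l K : ℕ} {y y' : Pat A16 m₀ n₀} (hy : y ∈ PT m₀ n₀)
    (hy' : y' ∈ PT m₀ n₀) (hB : 3 ≤ B) (hBm : B < 2 * m₀) (hlK : l + 2 ≤ 2 * K) (hK : K < n₀)
    (h : EqOn (uncurry (muPatE y)) (uncurry (muPatE y')) (Icc 1 B ×ˢ Icc l (2 * K))) :
    EqOn (uncurry (muPatE y)) (uncurry (muPatE y')) (Icc 0 B ×ˢ Icc l (2 * K + 1)) := by
  have hcore (i : Fin m₀) (j : Fin n₀) (δ ε : Fin 2) (h₁ : 1 ≤ 2 * (i : ℕ) + δ)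
      (h₂ : 2 * (i : ℕ) + δ ≤ B) (h₃ : l ≤ 2 * (j : ℕ) + ε) (h₄ : 2 * (j : ℕ) + ε ≤ 2 * K) :
      mu (y i j) δ ε = mu (y' i j) δ ε := by
    simpa only [uncurry_apply_pair, muPatE_block] using
      h (by simp only [mem_prod, mem_Icc]; omega : (2 * (i : ℕ) + δ, 2 * (j : ℕ) + ε) ∈ _)
  have hanchor : y ⟨1, by omega⟩ ⟨K - 1, by omega⟩ = y' ⟨1, by omega⟩ ⟨K - 1, by omega⟩ := by
    refine mu_injective (funext₂ fun δ ε => hcore _ _ δ ε ?_ ?_ ?_ ?_) <;> simp <;> omega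
  have hclass := blockRow_blockCol_eq_of_eq hy hy' hanchor
  suffices hcell : ∀ (i : Fin m₀) (j : Fin n₀) (δ ε : Fin 2), 2 * (i : ℕ) + δ ≤ B →
      l ≤ 2 * (j : ℕ) + ε → 2 * (j : ℕ) + ε ≤ 2 * K + 1 → mu (y i j) δ ε = mu (y' i j) δ ε by
    rintro ⟨r, c⟩ ⟨⟨-, hr⟩, hlc, hc⟩
    have := hcell ⟨r / 2, by omega⟩ ⟨c / 2, by omega⟩ ⟨r % 2, by omega⟩ ⟨c % 2, by omega⟩
      (by dsimp only; omega) (by dsimp only; omega) (by dsimp only; omega)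
    simpa only [← muPatE_block, Nat.div_add_mod, uncurry_apply_pair] using this
  intro i j δ ε hr hl hc
  by_cases hletter : 2 * (i : ℕ) + 1 ≤ B ∧ l ≤ 2 * (j : ℕ)
  · rw [eq_of_mu_one_zero_eq (hcore i j 1 0 (by omega) (by omega)
      (by omega) (by omega)) (hclass i j).1 (hclass i j).2]
  by_cases hin : 1 ≤ 2 * (i : ℕ) + δ ∧ 2 * (j : ℕ) + ε ≤ 2 * K
  · exact hcore i j δ ε hin.1 hr hl hin.2
  rcases Nat.lt_or_ge B (2 * (i : ℕ) + 1) with hbottom | hbottom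
  · obtain ⟨rfl, rfl⟩ : δ = 0 ∧ ε = 1 := by omega
    exact mu_zero_one_eq_of_mu_zero_zero_eq (hcore i j 0 0 (by omega) (by omega)
      (by omega) (by omega)) (hclass i j).1 (hclass i j).2
  · obtain ⟨rfl, rfl⟩ : δ = 0 ∧ ε = 1 := by omega
    exact mu_zero_one_eq_of_mu_one_one_eq (hcore i j 1 1 (by omega) (by omega)
      (by omega) (by omega)) (hclass i j).1 (hclass i j).2

-- The corner `(r, c)` is 0-based, whereas `Pij i j` uses the 1-based corner `(i, j)`.
def muWindow {m₀ n₀ : ℕ} (y : Pat A16 m₀ n₀) (r c m n : ℕ) : Pat A16 m n :=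
  fun a b => muPatE y (r + a) (c + b)

lemma muWindow_eq_iff {m₀ n₀ : ℕ} {y y' : Pat A16 m₀ n₀} {r c m n : ℕ} :
    muWindow y r c m n = muWindow y' r c m n ↔
      EqOn (uncurry (muPatE y)) (uncurry (muPatE y')) (Ico r (r + m) ×ˢ Ico c (c + n)) := by
  refine ⟨fun h => ?_, fun h => funext₂ fun a b => h (show (r + (a : ℕ), c + (b : ℕ)) ∈ _ by
    simp only [mem_prod, mem_Ico]; omega)⟩
  rintro ⟨r', c'⟩ ⟨⟨hr, hr'⟩, hc, hc'⟩
  simpa [muWindow, Nat.add_sub_cancel' hr, Nat.add_sub_cancel' hc] using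
    congr_fun₂ h ⟨r' - r, by omega⟩ ⟨c' - c, by omega⟩

lemma Pij_eq_image {i j m n m₀ n₀ : ℕ} (hm : m₀ ≤ m) (hn : n₀ ≤ n) (hrow : i - 1 + m ≤ 2 * m₀)
    (hcol : j - 1 + n ≤ 2 * n₀) :
    Pij i j m n = (fun y => muWindow y (i - 1) (j - 1) m n) '' PT m₀ n₀ := by
  have hwindow (x : Pat A16 m n) :
      muWindow (x.restrict hm hn) (i - 1) (j - 1) m n = muWindow x (i - 1) (j - 1) m n :=
    funext₂ fun a b => muPatE_restrict hm hn x (by omega) (by omega)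
  rw [← image_restrict_PT hm hn, image_image]
  simp only [hwindow]
  ext q
  simp [Pij, muWindow, funext_iff, eq_comm]

lemma muWindow_eq_iff_eqOn {m₀ n₀ B l K r m n : ℕ} {y y' : Pat A16 m₀ n₀}
    (hy : y ∈ PT m₀ n₀) (hy' : y' ∈ PT m₀ n₀) (hB : 3 ≤ B) (hBm : B < 2 * m₀)
    (hlK : l + 2 ≤ 2 * K) (hK : K < n₀) (hr : r ≤ 1) (hrm : r + m = B + 1)
    (hn : 2 * K + 1 ≤ l + n) (hn' : l + n ≤ 2 * K + 2) :
    muWindow y r l m n = muWindow y' r l m n ↔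
      EqOn (uncurry (muPatE y)) (uncurry (muPatE y')) (Icc 0 B ×ˢ Icc l (2 * K + 1)) := by
  rw [muWindow_eq_iff]
  refine ⟨fun h => eqOn_of_eqOn_core hy hy' hB hBm hlK hK (h.mono ?_), fun h => h.mono ?_⟩ <;>
  · rintro ⟨a, b⟩
    simp only [mem_prod, mem_Icc, mem_Ico]
    omega

/- In 0-based coordinates the window of `Pij i j m n` has top row `i - 1`, bottom row
`i - 1 + m - 1` and columns `j - 1` to `j - 1 + n - 1`: the two windows share their bottom row
and left column, and their right columns lie in the same block column. -/
theorem card_Pij_eq_card_Pij {i i' j m m' n n' : ℕ} (hi : i - 1 ≤ 1) (hi' : i' - 1 ≤ 1)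
    (hrow : i - 1 + m = i' - 1 + m') (hheight : 4 ≤ i - 1 + m)
    (hcol : (j - 1 + n - 1) / 2 = (j - 1 + n' - 1) / 2) (hanchor : j - 1 + 3 ≤ n) :
    Nat.card (Pij i j m n) = Nat.card (Pij i' j m' n') := by
  set B := i - 1 + m - 1
  set K := (j - 1 + n - 1) / 2
  rw [Pij_eq_image (m₀ := B / 2 + 1) (n₀ := K + 1) (by omega) (by omega) (by omega) (by omega),
    Pij_eq_image (m₀ := B / 2 + 1) (n₀ := K + 1) (by omega) (by omega) (by omega) (by omega)]
  refine natCard_image_eq_of_forall_iff fun y hy y' hy' => ?_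
  rw [muWindow_eq_iff_eqOn (B := B) (K := K) hy hy' (by omega) (by omega) (by omega) (by omega)
      (by omega) (by omega) (by omega) (by omega),
    muWindow_eq_iff_eqOn (B := B) (K := K) hy hy' (by omega) (by omega) (by omega) (by omega)
      (by omega) (by omega) (by omega) (by omega)]

/-- Lemma 4.2: the first list of equalities among a, b, c. -/
theorem first_abc_equalities (n : ℕ) (hn : 2 ≤ n) :
    (aT 1 2 (2 * n) = bT 1 2 (2 * n) ∧ aT 1 2 (2 * n) = bT 2 2 (2 * n - 1)) ∧
    (aT 2 1 (2 * n) = cT 1 1 (2 * n) ∧ aT 2 1 (2 * n) = cT 2 1 (2 * n - 1)) ∧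
    (aT 2 2 (2 * n) = aT 1 2 (2 * n + 1) ∧ aT 2 2 (2 * n) = cT 1 2 (2 * n) ∧
      aT 2 2 (2 * n) = bT 2 2 (2 * n)) ∧
    (aT 1 1 (2 * n + 1) = bT 1 1 (2 * n + 1) ∧
      aT 1 1 (2 * n + 1) = bT 2 1 (2 * n)) ∧
    (aT 2 1 (2 * n + 1) = aT 1 1 (2 * n + 2) ∧
      aT 2 1 (2 * n + 1) = bT 2 1 (2 * n + 1) ∧
      aT 2 1 (2 * n + 1) = cT 1 1 (2 * n + 1)) ∧
    (aT 2 2 (2 * n + 1) = cT 1 2 (2 * n + 1) ∧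
      aT 2 2 (2 * n + 1) = cT 2 2 (2 * n)) := by
  unfold aT bT cT
  refine ⟨⟨?_, ?_⟩, ⟨?_, ?_⟩, ⟨?_, ?_, ?_⟩, ⟨?_, ?_⟩, ⟨?_, ?_, ?_⟩, ⟨?_, ?_⟩⟩ <;>
  · apply card_Pij_eq_card_Pij <;> omega
end
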